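/- Let r > 0 and a0 ≥ 0 with 2a0 + 2r < 1, and let c(w) = w^3 - 2a0 w - 2r. Then c has exactly one positive real root w0, and 0 < w0 < 1. Moreover: (i) if 8a0^3 < 27r^2, then w0 is the only real root of c and the other two roots are non-real complex conjugates of each other lying in the open unit disk; (ii) if 8a0^3 > 27r^2, then c has three distinct real roots w1 < w2 < w0 with -1 < w1 < w2 < 0; (iii) if 8a0^3 = 27r^2, then c has the simple root w0 ∈ (0,1) and a real double root lying in (-1, 0). -/

import Mathlib

noncomputable section

open Complex

/-- The real cubic `c(w) = w^3 - 2 a0 w - 2 r` whose roots are the critical points of `h`. -/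
def cubicR (r a0 w : ℝ) : ℝ := w^3 - 2*a0*w - 2*r

/-- The same cubic, as a function of a complex variable. -/
def cubicC (r a0 : ℝ) (w : ℂ) : ℂ := w^3 - 2*(a0:ℂ)*w - 2*(r:ℂ)

/-!
Intermediate values give a root `s ∈ (0, 1)` of `c`, since `c 0 = -2r < 0 < 1 - 2a0 - 2r = c 1`.
Dividing it out, `c w = (w - s) q w` with `q w = w^2 + s w + s^2 - 2a0`, and `s^3 = 2a0 s + 2r`
forces `s^2 > 2a0`, so `q` is positive on `w > 0` and `s` is the only positive root.
The other two roots are those of `q`; they are governed by the sign of `disc q = 8a0 - 3s^2`,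
which is the sign of `8a0^3 - 27r^2` because `disc c = disc q · q(s)^2`. Their size is
controlled by `q(0) = s^2 - 2a0 < 1`, the product of the roots of `q`, and by `disc q < s^2`.
-/

open Set ComplexConjugate

theorem cubicC_ofReal (r a0 w : ℝ) : cubicC r a0 w = cubicR r a0 w := by
  simp only [cubicC, cubicR]
  push_cast
  ring

theorem deriv_cubicR (r a0 w : ℝ) : deriv (cubicR r a0) w = 3 * w^2 - 2*a0 := by
  have h : HasDerivAt (cubicR r a0) (3 * w^2 - 2*a0) w := by
    unfold cubicR
    simpa using ((hasDerivAt_pow 3 w).sub ((hasDerivAt_id w).const_mul (2*a0))).sub_const (2*r)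
  exact h.deriv

theorem exists_cubicR_eq_zero_mem_Ioo {r a0 : ℝ} (hr : 0 < r) (h : 2*a0 + 2*r < 1) :
    ∃ s ∈ Ioo (0:ℝ) 1, cubicR r a0 s = 0 := by
  have hcont : Continuous (cubicR r a0) := by
    unfold cubicR
    fun_prop
  exact intermediate_value_Ioo zero_le_one hcont.continuousOn
    ⟨by norm_num [cubicR]; linarith, by norm_num [cubicR]; linarith⟩

theorem Complex.sub_mul_sub_conj (u z : ℂ) :
    (u - z) * (u - conj z) = u^2 - 2 * z.re * u + normSq z := by
  have hadd := add_conj z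
  have hmul := mul_conj z
  push_cast at hadd hmul
  linear_combination (-u) * hadd + hmul

section Root

variable {r a0 s : ℝ}

theorem cubicR_eq_sub_mul (hs : cubicR r a0 s = 0) (w : ℝ) :
    cubicR r a0 w = (w - s) * (w^2 + s*w + s^2 - 2*a0) := by
  unfold cubicR at *
  linear_combination hs

theorem cubicC_eq_sub_mul (hs : cubicR r a0 s = 0) (u : ℂ) :
    cubicC r a0 u = (u - s) * (u^2 + s*u + s^2 - 2*a0) := by
  have hsC : cubicC r a0 s = 0 := by rw [cubicC_ofReal, hs, ofReal_zero]
  unfold cubicC at *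
  linear_combination hsC

theorem two_mul_lt_sq_of_cubicR_eq_zero (hr : 0 < r) (hs0 : 0 < s) (hs : cubicR r a0 s = 0) :
    2*a0 < s^2 := by
  unfold cubicR at hs
  nlinarith

theorem eq_of_cubicR_eq_zero_of_pos (hr : 0 < r) (hs0 : 0 < s) (hs : cubicR r a0 s = 0)
    {w : ℝ} (hw : 0 < w) (hcw : cubicR r a0 w = 0) : w = s := by
  have hq : 0 < w^2 + s*w + s^2 - 2*a0 := by
    nlinarith [two_mul_lt_sq_of_cubicR_eq_zero hr hs0 hs, mul_pos hw hs0]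
  rw [cubicR_eq_sub_mul hs, mul_eq_zero] at hcw
  exact sub_eq_zero.mp (hcw.resolve_right hq.ne')

/-- This is `disc c = disc q · q(s)^2` for `c = (w - s) q`, where `disc c = 4 (8a0^3 - 27r^2)`
and `q(s) = 3s^2 - 2a0`. -/
theorem discrim_mul_sq_of_cubicR_eq_zero (hs : cubicR r a0 s = 0) :
    discrim 1 s (s^2 - 2*a0) * (3*s^2 - 2*a0)^2 = 4 * (8*a0^3 - 27*r^2) := by
  unfold cubicR at hs
  unfold discrim
  linear_combination (-27 * (s^3 - 2*a0*s + 2*r)) * hs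

theorem discrim_neg_of_cubicR_eq_zero (hs : cubicR r a0 s = 0)
    (hE : 8*a0^3 < 27*r^2) : discrim 1 s (s^2 - 2*a0) < 0 :=
  neg_of_mul_neg_left (by linarith [discrim_mul_sq_of_cubicR_eq_zero hs])
    (sq_nonneg (3*s^2 - 2*a0))

theorem discrim_pos_of_cubicR_eq_zero (hs : cubicR r a0 s = 0)
    (hE : 27*r^2 < 8*a0^3) : 0 < discrim 1 s (s^2 - 2*a0) :=
  pos_of_mul_pos_left (by linarith [discrim_mul_sq_of_cubicR_eq_zero hs])
    (sq_nonneg (3*s^2 - 2*a0))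

theorem discrim_eq_zero_of_cubicR_eq_zero (hs : cubicR r a0 s = 0) (hs2 : 2*a0 < s^2)
    (hE : 8*a0^3 = 27*r^2) : discrim 1 s (s^2 - 2*a0) = 0 := by
  have hm : (3*s^2 - 2*a0)^2 ≠ 0 := pow_ne_zero 2 (by nlinarith)
  have hprod := discrim_mul_sq_of_cubicR_eq_zero hs
  rw [hE, sub_self, mul_zero, mul_eq_zero] at hprod
  exact hprod.resolve_right hm

theorem eq_of_cubicR_eq_zero_of_discrim_neg (hs : cubicR r a0 s = 0)
    (hD : discrim 1 s (s^2 - 2*a0) < 0) {w : ℝ} (hcw : cubicR r a0 w = 0) : w = s := by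
  unfold discrim at hD
  have hq : 0 < w^2 + s*w + s^2 - 2*a0 := by nlinarith [sq_nonneg (2*w + s)]
  rw [cubicR_eq_sub_mul hs, mul_eq_zero] at hcw
  exact sub_eq_zero.mp (hcw.resolve_right hq.ne')

theorem cubicC_eq_sub_mul_sub_mul_sub_conj (hs : cubicR r a0 s = 0) {z : ℂ} (hre : z.re = -s/2)
    (hnorm : normSq z = s^2 - 2*a0) (u : ℂ) :
    cubicC r a0 u = (u - s) * ((u - z) * (u - conj z)) := by
  rw [cubicC_eq_sub_mul hs, Complex.sub_mul_sub_conj, hre, hnorm]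
  push_cast
  ring

theorem exists_conj_roots_of_discrim_neg (ha : 0 ≤ a0) (hs0 : 0 < s) (hs1 : s < 1)
    (hs : cubicR r a0 s = 0) (hD : discrim 1 s (s^2 - 2*a0) < 0) :
    ∃ z : ℂ, z.im ≠ 0 ∧ ‖z‖ < 1 ∧ cubicC r a0 z = 0 ∧ cubicC r a0 (conj z) = 0 ∧
      ∀ u : ℂ, cubicC r a0 u = 0 → u = s ∨ u = z ∨ u = conj z := by
  set q := √(-discrim 1 s (s^2 - 2*a0))
  have hq : q^2 = -discrim 1 s (s^2 - 2*a0) := Real.sq_sqrt (by linarith)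
  have hq0 : 0 < q := Real.sqrt_pos.mpr (by linarith)
  set z : ℂ := ⟨-s/2, q/2⟩
  have hnorm : normSq z = s^2 - 2*a0 := by
    unfold discrim at hq
    rw [normSq_mk]
    linear_combination hq / 4
  have hfac := cubicC_eq_sub_mul_sub_mul_sub_conj hs rfl hnorm
  refine ⟨z, (half_pos hq0).ne', ?_, by simp [hfac], by simp [hfac], fun u hu => ?_⟩
  · rw [← sq_lt_one_iff₀ (norm_nonneg z), Complex.sq_norm, hnorm]
    nlinarith
  · simp only [hfac, mul_eq_zero, sub_eq_zero] at hu
    tauto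

theorem exists_neg_roots_of_discrim_pos (hs0 : 0 < s) (hs1 : s < 1) (hs : cubicR r a0 s = 0)
    (hs2 : 2*a0 < s^2) (hD : 0 < discrim 1 s (s^2 - 2*a0)) :
    ∃ w1 w2 : ℝ, -1 < w1 ∧ w1 < w2 ∧ w2 < 0 ∧ cubicR r a0 w1 = 0 ∧ cubicR r a0 w2 = 0 := by
  set q := √(discrim 1 s (s^2 - 2*a0))
  have hq : q^2 = discrim 1 s (s^2 - 2*a0) := Real.sq_sqrt hD.le
  have hq0 : 0 < q := Real.sqrt_pos.mpr hD
  unfold discrim at hq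
  have hqs : q < s := lt_of_pow_lt_pow_left₀ 2 hs0.le (by linarith)
  refine ⟨(-s - q)/2, (-s + q)/2, by linarith, by linarith, by linarith, ?_, ?_⟩
  · rw [cubicR_eq_sub_mul hs]
    linear_combination (((-s - q)/2 - s)/4) * hq
  · rw [cubicR_eq_sub_mul hs]
    linear_combination (((-s + q)/2 - s)/4) * hq

theorem exists_double_root_of_discrim_eq_zero (hs0 : 0 < s) (hs1 : s < 1)
    (hs : cubicR r a0 s = 0) (hD : discrim 1 s (s^2 - 2*a0) = 0) :
    ∃ wd : ℝ, -1 < wd ∧ wd < 0 ∧ cubicR r a0 wd = 0 ∧ deriv (cubicR r a0) wd = 0 := by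
  unfold discrim at hD
  refine ⟨-s/2, by linarith, by linarith, ?_, ?_⟩
  · rw [cubicR_eq_sub_mul hs]
    linear_combination (3*s/8) * hD
  · rw [deriv_cubicR]
    linear_combination (-1/4) * hD

end Root

/-- Location of the critical points of `h`: under `r > 0`, `a0 ≥ 0`, `2a0 + 2r < 1`,
the cubic `c` has exactly one positive real root `w0 ∈ (0,1)`; moreover:
(i) in the three-cut case `8a0^3 < 27r^2`, `w0` is the only real root and the other two
roots are non-real complex conjugates in the open unit disk;
(ii) in the one-cut case `8a0^3 > 27r^2`, there are three distinct real roots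
`w1 < w2 < w0` with `-1 < w1 < w2 < 0`;
(iii) on the critical curve `8a0^3 = 27r^2`, `c` has a real double root in `(-1, 0)`. -/
theorem location_of_critical_points (r a0 : ℝ) (hr : 0 < r) (ha : 0 ≤ a0)
    (h : 2*a0 + 2*r < 1) :
    ∃ w0 : ℝ, 0 < w0 ∧ w0 < 1 ∧ cubicR r a0 w0 = 0 ∧
      (∀ w : ℝ, 0 < w → cubicR r a0 w = 0 → w = w0) ∧
      (8*a0^3 < 27*r^2 →
        (∀ w : ℝ, cubicR r a0 w = 0 → w = w0) ∧
        ∃ z : ℂ, z.im ≠ 0 ∧ ‖z‖ < 1 ∧ cubicC r a0 z = 0 ∧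
          cubicC r a0 ((starRingEnd ℂ) z) = 0 ∧
          (∀ u : ℂ, cubicC r a0 u = 0 → u = (w0:ℂ) ∨ u = z ∨ u = (starRingEnd ℂ) z)) ∧
      (8*a0^3 > 27*r^2 →
        ∃ w1 w2 : ℝ, -1 < w1 ∧ w1 < w2 ∧ w2 < 0 ∧
          cubicR r a0 w1 = 0 ∧ cubicR r a0 w2 = 0) ∧
      (8*a0^3 = 27*r^2 →
        ∃ wd : ℝ, -1 < wd ∧ wd < 0 ∧ cubicR r a0 wd = 0 ∧
          deriv (cubicR r a0) wd = 0) := by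
  obtain ⟨s, ⟨hs0, hs1⟩, hs⟩ := exists_cubicR_eq_zero_mem_Ioo hr h
  have hs2 := two_mul_lt_sq_of_cubicR_eq_zero hr hs0 hs
  refine ⟨s, hs0, hs1, hs, fun w => eq_of_cubicR_eq_zero_of_pos hr hs0 hs, fun hE => ?_,
    fun hE => ?_, fun hE => ?_⟩
  · have hD := discrim_neg_of_cubicR_eq_zero hs hE
    exact ⟨fun w => eq_of_cubicR_eq_zero_of_discrim_neg hs hD,
      exists_conj_roots_of_discrim_neg ha hs0 hs1 hs hD⟩
  · exact exists_neg_roots_of_discrim_pos hs0 hs1 hs hs2 (discrim_pos_of_cubicR_eq_zero hs hE)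
  · exact exists_double_root_of_discrim_eq_zero hs0 hs1 hs
      (discrim_eq_zero_of_cubicR_eq_zero hs hs2 hE)
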